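/- Let k ≥ 1 be an integer, ℏ = 1/k, and let a, b : ℝ^{2n} → ℂ be smooth k-quasi-periodic functions. Then ∫_{[0,1]^{2n}} a(u) · conj(b(u)) d^{2n}u = Σ_{m ∈ {0,...,k−1}^n} ∫_{ℝ^n} (a)_m(y) · conj((b)_m(y)) d^n y, where each integral on the right converges absolutely. (The Weil–Brezin transform is unitary.) -/

import Mathlib

open MeasureTheory Complex
open scoped Real

noncomputable section

/-- The unit box `[0,1]^n` in `ℝ^n`. -/
def box (n : ℕ) : Set (Fin n → ℝ) := Set.univ.pi fun _ => Set.Icc (0:ℝ) 1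

/-- `k`-quasi-periodicity of `s : ℝ^{2n} → ℂ`, written in coordinates `u = (x,y)`,
`λ = (a,b)`: `s(u+λ) = α(λ)^k e^{-kπ√-1 ω(u,λ)} s(u)`, where
`α(λ) = (-1)^{Σ a_i b_i}` and `ω((x,y),(a,b)) = Σ (y_i a_i − x_i b_i)`. -/
def QuasiPeriodic (n k : ℕ) (s : (Fin n → ℝ) × (Fin n → ℝ) → ℂ) : Prop :=
  ∀ (x y : Fin n → ℝ) (a b : Fin n → ℤ),
    s (x + fun i => (a i : ℝ), y + fun i => (b i : ℝ)) =
      ((-1 : ℂ) ^ (∑ i, a i * b i)) ^ k *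
        Complex.exp (-(k : ℂ) * π * Complex.I *
          ∑ i, ((y i : ℂ) * (a i : ℂ) - (x i : ℂ) * (b i : ℂ))) *
        s (x, y)

/-- The Weil–Brezin coefficient of `s` at `m ∈ ℤ^n` (with `ℏ = 1/k`):
`(s)_m(y) = ∫_{[0,1]^n} s̃(x, y + ℏm) e^{-2π√-1 m·x} dx`, where
`s̃(x,y) = e^{kπ√-1 x·y} s(x,y)`. -/
def wb (n k : ℕ) (s : (Fin n → ℝ) × (Fin n → ℝ) → ℂ) (m : Fin n → ℤ) (y : Fin n → ℝ) : ℂ :=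
  ∫ x in box n,
    Complex.exp ((k : ℂ) * π * Complex.I * ∑ i, (x i : ℂ) * ((y i : ℂ) + (m i : ℂ) / k)) *
        s (x, y + fun i => (m i : ℝ) / k) *
      Complex.exp (-2 * π * Complex.I * ∑ i, (m i : ℂ) * (x i : ℂ))

open Set Submodule
open scoped ENNReal ComplexConjugate

namespace WB





local instance fact01 : Fact ((0:ℝ) < 1) := ⟨one_pos⟩

abbrev Torus (n : ℕ) := Fin n → AddCircle (1:ℝ)

lemma volume_addCircle_eq : (volume : Measure (AddCircle (1:ℝ))) = AddCircle.haarAddCircle := by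
  rw [AddCircle.volume_eq_smul_haarAddCircle]; simp

instance : IsProbabilityMeasure (volume : Measure (AddCircle (1:ℝ))) := by
  rw [volume_addCircle_eq]; infer_instance

instance (n : ℕ) : IsProbabilityMeasure (volume : Measure (Torus n)) :=
  MeasureTheory.Measure.pi.instIsProbabilityMeasure _

def char {n : ℕ} (m : Fin n → ℤ) : C(Torus n, ℂ) where
  toFun z := ∏ i, fourier (m i) (z i)
  continuous_toFun := continuous_finset_prod _ fun i _ =>
    (fourier (m i)).continuous.comp (continuous_apply i)

@[simp] lemma char_apply {n : ℕ} (m : Fin n → ℤ) (z : Torus n) :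
    char m z = ∏ i, fourier (m i) (z i) := rfl

lemma char_zero {n : ℕ} (z : Torus n) : char 0 z = 1 := by
  simp [char_apply, fourier_zero]

lemma char_add {n : ℕ} (m l : Fin n → ℤ) (z : Torus n) :
    char (m + l) z = char m z * char l z := by
  simp only [char_apply, Pi.add_apply, fourier_add]
  rw [Finset.prod_mul_distrib]

lemma char_neg {n : ℕ} (m : Fin n → ℤ) (z : Torus n) :
    char (-m) z = conj (char m z) := by
  simp only [char_apply, Pi.neg_apply, fourier_neg, map_prod]

lemma integral_fourier (j : ℤ) :
    (∫ t : AddCircle (1:ℝ), fourier j t ∂AddCircle.haarAddCircle) = if j = 0 then 1 else 0 := by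
  have h := (orthonormal_iff_ite.mp (orthonormal_fourier (T := 1))) 0 j
  rw [ContinuousMap.inner_toLp] at h
  simp only [fourier_zero, map_one, one_mul, mul_one] at h
  rw [h]
  simp [eq_comm]

lemma integral_char {n : ℕ} (m : Fin n → ℤ) :
    (∫ z : Torus n, char m z) = if m = 0 then 1 else 0 := by
  have : (∫ z : Torus n, char m z) = ∏ i, ∫ t : AddCircle (1:ℝ), fourier (m i) t := by
    simpa [char_apply, volume_pi] using
      MeasureTheory.integral_fintype_prod_eq_prod (𝕜 := ℂ)
        (fun i (t : AddCircle (1:ℝ)) => fourier (m i) t)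
  rw [this]
  have h1 : ∀ i, (∫ t : AddCircle (1:ℝ), fourier (m i) t) = if m i = 0 then 1 else 0 := by
    intro i
    rw [← integral_fourier (m i)]
    rw [volume_addCircle_eq]
  simp_rw [h1]
  by_cases hm : m = 0
  · simp [hm]
  · obtain ⟨i, hi⟩ := Function.ne_iff.mp hm
    rw [if_neg hm]
    exact Finset.prod_eq_zero (Finset.mem_univ i) (by simpa using hi)

/-- characters as L² elements -/
def charLp (n : ℕ) (m : Fin n → ℤ) : Lp ℂ 2 (volume : Measure (Torus n)) :=
  ContinuousMap.toLp (E := ℂ) 2 volume ℂ (char m)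

lemma coeFn_charLp (n : ℕ) (m : Fin n → ℤ) : charLp n m =ᵐ[volume] char m :=
  ContinuousMap.coeFn_toLp volume (char m)

lemma orthonormal_char (n : ℕ) : Orthonormal ℂ (charLp n) := by
  rw [orthonormal_iff_ite]
  intro i j
  rw [charLp, charLp, ContinuousMap.inner_toLp volume (char i) (char j)]
  have : ∀ z : Torus n, char j z * conj (char i z) = char (-i + j) z := by
    intro z; rw [char_add, char_neg, mul_comm]
  simp_rw [this]
  rw [integral_char]
  by_cases h : i = j
  · simp [h]
  · rw [if_neg h, if_neg (by simpa [neg_add_eq_zero] using h)]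

/-- Star subalgebra generated by characters. -/
def charSubalgebra (n : ℕ) : StarSubalgebra ℂ C(Torus n, ℂ) where
  toSubalgebra := Algebra.adjoin ℂ (range (char (n := n)))
  star_mem' := by
    show Algebra.adjoin ℂ (range (char (n := n))) ≤
      star (Algebra.adjoin ℂ (range (char (n := n))))
    refine Algebra.adjoin_le ?_
    rintro - ⟨m, rfl⟩
    exact Algebra.subset_adjoin ⟨-m, ContinuousMap.ext fun z => char_neg m z⟩

lemma charSubalgebra_coe (n : ℕ) :
    Subalgebra.toSubmodule (charSubalgebra n).toSubalgebra =
      span ℂ (range (char (n := n))) := by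
  apply Algebra.adjoin_eq_span_of_subset
  refine Subset.trans ?_ Submodule.subset_span
  intro x hx
  refine Submonoid.closure_induction (fun _ => id) ⟨0, ?_⟩ ?_ hx
  · ext1 z; exact char_zero z
  · rintro - - - - ⟨m, rfl⟩ ⟨l, rfl⟩
    exact ⟨m + l, ContinuousMap.ext fun z => char_add m l z⟩

lemma charSubalgebra_separatesPoints (n : ℕ) : (charSubalgebra n).SeparatesPoints := by
  intro z w hzw
  obtain ⟨i, hi⟩ := Function.ne_iff.mp hzw
  refine ⟨_, ⟨char (Pi.single i 1), Algebra.subset_adjoin ⟨Pi.single i 1, rfl⟩, rfl⟩, ?_⟩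
  dsimp only
  have hv : ∀ u : Torus n, char (Pi.single i 1) u = fourier 1 (u i) := by
    intro u
    rw [char_apply]
    rw [Finset.prod_eq_single i (fun j _ hj => by
      rw [Pi.single_eq_of_ne hj]; exact fourier_zero)
      (fun h => absurd (Finset.mem_univ i) h)]
    rw [Pi.single_eq_same]
  rw [hv, hv]
  simp only [fourier_one]
  intro h
  apply hi
  exact AddCircle.injective_toCircle one_ne_zero (Subtype.coe_inj.mp h)

lemma charSubalgebra_closure_eq_top (n : ℕ) :
    (charSubalgebra n).topologicalClosure = ⊤ :=
  ContinuousMap.starSubalgebra_topologicalClosure_eq_top_of_separatesPoints _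
    (charSubalgebra_separatesPoints n)

lemma span_char_closure_eq_top (n : ℕ) :
    (span ℂ (range (char (n := n)))).topologicalClosure = ⊤ := by
  rw [← charSubalgebra_coe]
  exact congr_arg (Subalgebra.toSubmodule <| StarSubalgebra.toSubalgebra ·)
    (charSubalgebra_closure_eq_top n)

lemma span_charLp_closure_eq_top (n : ℕ) :
    (span ℂ (range (charLp n))).topologicalClosure = ⊤ := by
  convert
    (ContinuousMap.toLp_denseRange ℂ (volume : Measure (Torus n)) ℂ
      (by norm_num : (2 : ℝ≥0∞) ≠ ∞)).topologicalClosure_map_submodule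
      (span_char_closure_eq_top n)
  · rfl
  erw [map_span, range_comp]
  simp only [ContinuousLinearMap.coe_coe]

/-- Hilbert basis of characters on the torus. -/
def charBasis (n : ℕ) : HilbertBasis (Fin n → ℤ) ℂ (Lp ℂ 2 (volume : Measure (Torus n))) :=
  HilbertBasis.mk (orthonormal_char n) (span_charLp_closure_eq_top n).ge

lemma coe_charBasis (n : ℕ) : ⇑(charBasis n) = charLp n :=
  HilbertBasis.coe_mk _ _








def IocBox (n : ℕ) : Set (Fin n → ℝ) := Set.univ.pi fun _ => Set.Ioc (0:ℝ) 1

lemma measurableSet_IocBox (n : ℕ) : MeasurableSet (IocBox n) :=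
  MeasurableSet.univ_pi fun _ => measurableSet_Ioc

lemma measurableSet_box (n : ℕ) : MeasurableSet (box n) :=
  MeasurableSet.univ_pi fun _ => measurableSet_Icc

lemma volume_box (n : ℕ) : volume (box n) = 1 := by
  rw [box, volume_pi_pi]
  simp [Real.volume_Icc]

lemma volume_IocBox (n : ℕ) : volume (IocBox n) = 1 := by
  rw [IocBox, volume_pi_pi]
  simp [Real.volume_Ioc]

lemma restrict_box_eq (n : ℕ) :
    (volume : Measure (Fin n → ℝ)).restrict (box n) = volume.restrict (IocBox n) := by
  refine (Measure.restrict_congr_set ?_).symm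
  refine ae_eq_of_subset_of_measure_ge (fun x hx i hi => Ioc_subset_Icc_self (hx i hi))
    ?_ (measurableSet_IocBox n).nullMeasurableSet ?_
  · rw [volume_box, volume_IocBox]
  · rw [volume_box]; exact ENNReal.one_ne_top

/-- The projection `ℝⁿ → Torus n`. -/
def tmk (n : ℕ) : (Fin n → ℝ) → Torus n := fun x i => (x i : AddCircle (1:ℝ))

lemma measurable_tmk (n : ℕ) : Measurable (tmk n) :=
  measurable_pi_lambda _ fun i =>
    (AddCircle.measurePreserving_mk (1:ℝ) 0).measurable.comp (measurable_pi_apply i)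

lemma volume_addCircle_eq' : (volume : Measure (AddCircle (1:ℝ))) = AddCircle.haarAddCircle := by
  rw [AddCircle.volume_eq_smul_haarAddCircle]; simp

lemma measurePreserving_tmk (n : ℕ) :
    MeasurePreserving (tmk n) (volume.restrict (IocBox n)) (volume : Measure (Torus n)) := by
  have h1 : (volume : Measure (Fin n → ℝ)).restrict (IocBox n) =
      Measure.pi fun _ : Fin n => volume.restrict (Ioc (0:ℝ) 1) := by
    refine (Measure.pi_eq fun s hs => ?_).symm
    rw [Measure.restrict_apply (MeasurableSet.univ_pi hs), IocBox, ← Set.pi_inter_distrib,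
      volume_pi_pi]
    exact Finset.prod_congr rfl fun i _ => (Measure.restrict_apply (hs i)).symm
  refine ⟨(measurable_tmk n), ?_⟩
  rw [h1, volume_pi]
  refine (Measure.pi_eq fun s hs => ?_).symm
  rw [Measure.map_apply (measurable_tmk n) (MeasurableSet.univ_pi hs)]
  have hpre : tmk n ⁻¹' (Set.univ.pi s) = Set.univ.pi fun i => ((↑) : ℝ → AddCircle (1:ℝ)) ⁻¹' s i := by
    ext x; simp [tmk, Set.mem_pi]
  rw [hpre, Measure.pi_pi]
  refine Finset.prod_congr rfl fun i _ => ?_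
  have := (AddCircle.measurePreserving_mk (1:ℝ) 0).measure_preimage (hs i).nullMeasurableSet
  rw [zero_add] at this
  exact this

/-- Integral over the torus equals integral over the `Ioc` box (hence over `box`). -/
lemma integral_torus_eq {n : ℕ} (g : Torus n → ℂ) (hg : AEStronglyMeasurable g volume) :
    (∫ z : Torus n, g z) = ∫ x in box n, g (tmk n x) := by
  rw [restrict_box_eq, ← (measurePreserving_tmk n).map_eq,
    integral_map (measurable_tmk n).aemeasurable]
  rwa [(measurePreserving_tmk n).map_eq]

/-- The measurable section of `tmk`. -/
def sect (n : ℕ) : Torus n → (Fin n → ℝ) := fun z i => (AddCircle.equivIoc 1 0 (z i) : ℝ)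

lemma measurable_sect (n : ℕ) : Measurable (sect n) :=
  measurable_pi_lambda _ fun i =>
    (measurable_subtype_coe.comp ((AddCircle.measurableEquivIoc 1 0).measurable.comp
      (measurable_pi_apply i)))

lemma sect_mem (n : ℕ) (z : Torus n) : ∀ i, sect n z i ∈ Ioc (0:ℝ) 1 := by
  intro i
  have := (AddCircle.equivIoc 1 0 (z i)).2
  simpa [sect] using this

lemma tmk_sect (n : ℕ) (z : Torus n) : tmk n (sect n z) = z := by
  funext i
  exact (AddCircle.equivIoc 1 0).symm_apply_apply (z i)

def descend (n : ℕ) (f : (Fin n → ℝ) → ℂ) : Torus n → ℂ := f ∘ sect n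

lemma measurable_descend {n : ℕ} {f : (Fin n → ℝ) → ℂ} (hf : Measurable f) :
    Measurable (descend n f) := hf.comp (measurable_sect n)

lemma descend_tmk {n : ℕ} {f : (Fin n → ℝ) → ℂ}
    (hf : ∀ (q : Fin n → ℤ) (x : Fin n → ℝ), f (x + fun i => (q i : ℝ)) = f x)
    (x : Fin n → ℝ) : descend n f (tmk n x) = f x := by
  set r := sect n (tmk n x) with hr
  have hri : ∀ i, ((r i : ℝ) : AddCircle (1:ℝ)) = ((x i : ℝ) : AddCircle (1:ℝ)) := by
    intro i
    have := congrFun (tmk_sect n (tmk n x)) i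
    exact this
  have hq : ∀ i, ∃ q : ℤ, r i = x i + (q : ℝ) := by
    intro i
    have h := (QuotientAddGroup.eq_iff_sub_mem).mp (hri i).symm
    obtain ⟨q, hq⟩ := h
    refine ⟨-q, ?_⟩
    simp only [zsmul_eq_mul, mul_one] at hq
    push_cast
    linarith
  choose q hq using hq
  have : r = x + fun i => (q i : ℝ) := funext fun i => by simpa using hq i
  calc descend n f (tmk n x) = f r := rfl
    _ = f (x + fun i => (q i : ℝ)) := by rw [← this]
    _ = f x := hf q x





/-- `ℤ ≃ Fin k × ℤ`, `m = r - k q`. -/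
def zEquiv (k : ℕ) (hk : 0 < k) : ℤ ≃ Fin k × ℤ where
  toFun m := (⟨(m % (k:ℤ)).toNat, by
      have h1 : 0 ≤ m % (k:ℤ) := Int.emod_nonneg m (by exact_mod_cast hk.ne')
      have h2 : m % (k:ℤ) < k := Int.emod_lt_of_pos m (by exact_mod_cast hk)
      omega⟩, -(m / (k:ℤ)))
  invFun p := (p.1 : ℤ) - (k:ℤ) * p.2
  left_inv m := by
    simp only
    have h1 : 0 ≤ m % (k:ℤ) := Int.emod_nonneg m (by exact_mod_cast hk.ne')
    rw [Int.toNat_of_nonneg h1]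
    rw [mul_neg, sub_neg_eq_add]
    exact Int.emod_add_mul_ediv m k
  right_inv p := by
    obtain ⟨r, q⟩ := p
    have hr0 : (0:ℤ) ≤ (r:ℤ) := Int.natCast_nonneg _
    have hrk : (r:ℤ) < (k:ℤ) := by exact_mod_cast r.2
    have hmod : ((r:ℤ) - (k:ℤ) * q) % (k:ℤ) = (r:ℤ) := by
      have h : (r:ℤ) - (k:ℤ) * q = (r:ℤ) + (k:ℤ) * (-q) := by ring
      rw [h, Int.add_mul_emod_self_left]
      exact Int.emod_eq_of_lt hr0 hrk
    have hdiv : ((r:ℤ) - (k:ℤ) * q) / (k:ℤ) = -q := by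
      have h : (r:ℤ) - (k:ℤ) * q = (r:ℤ) + (-q) * (k:ℤ) := by ring
      rw [h, Int.add_mul_ediv_right _ _ (by exact_mod_cast hk.ne' : (k:ℤ) ≠ 0)]
      rw [Int.ediv_eq_zero_of_lt hr0 hrk, zero_add]
    simp only [hmod, hdiv, neg_neg]
    ext
    · simp
    · rfl

lemma zEquiv_symm_apply (k : ℕ) (hk : 0 < k) (r : Fin k) (q : ℤ) :
    (zEquiv k hk).symm (r, q) = (r : ℤ) - (k:ℤ) * q := rfl

/-- `(Fin n → ℤ) ≃ (Fin n → Fin k) × (Fin n → ℤ)`. -/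
def zEquivn (n k : ℕ) (hk : 0 < k) : (Fin n → ℤ) ≃ (Fin n → Fin k) × (Fin n → ℤ) :=
  (Equiv.piCongrRight fun _ => zEquiv k hk).trans (Equiv.arrowProdEquivProdArrow _ _ _)

lemma zEquivn_symm_apply (n k : ℕ) (hk : 0 < k) (r : Fin n → Fin k) (q : Fin n → ℤ) (i : Fin n) :
    (zEquivn n k hk).symm (r, q) i = (r i : ℤ) - (k:ℤ) * q i := rfl


/-- the translated tile -/
def tile (n : ℕ) (q : Fin n → ℤ) : Set (Fin n → ℝ) :=
  (fun y => y + fun i => ((q i : ℝ))) ⁻¹' IocBox n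

lemma measurableSet_tile (n : ℕ) (q : Fin n → ℤ) : MeasurableSet (tile n q) :=
  (MeasurableSet.univ_pi fun _ => measurableSet_Ioc).preimage
    (measurable_id.add_const _)

lemma mem_tile_iff {n : ℕ} {q : Fin n → ℤ} {y : Fin n → ℝ} :
    y ∈ tile n q ↔ ∀ i, y i + q i ∈ Ioc (0:ℝ) 1 := by
  simp [tile, IocBox, Set.mem_pi]

lemma tile_disjoint (n : ℕ) : Pairwise (Function.onFun Disjoint (tile n)) := by
  intro q q' hqq'
  rw [Function.onFun, Set.disjoint_left]
  intro y hy hy'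
  apply hqq'
  funext i
  have h1 := (mem_tile_iff.mp hy) i
  have h2 := (mem_tile_iff.mp hy') i
  have : (⌈y i⌉ : ℤ) = -q i + 1 := by
    rw [Int.ceil_eq_iff]
    constructor
    · push_cast; linarith [h1.1, h1.2]
    · push_cast; linarith [h1.1, h1.2]
  have h' : (⌈y i⌉ : ℤ) = -q' i + 1 := by
    rw [Int.ceil_eq_iff]
    constructor
    · push_cast; linarith [h2.1, h2.2]
    · push_cast; linarith [h2.1, h2.2]
  omega

lemma tile_cover (n : ℕ) : (⋃ q : Fin n → ℤ, tile n q) = Set.univ := by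
  rw [Set.eq_univ_iff_forall]
  intro y
  refine Set.mem_iUnion.mpr ⟨fun i => -(⌈y i⌉ - 1), ?_⟩
  rw [mem_tile_iff]
  intro i
  constructor
  · push_cast; linarith [Int.ceil_lt_add_one (y i)]
  · push_cast; linarith [Int.le_ceil (y i)]

lemma setIntegral_tile {n : ℕ} (g : (Fin n → ℝ) → ℂ) (q : Fin n → ℤ) :
    (∫ y in tile n q, g y) = ∫ x in IocBox n, g (x - fun i => ((q i : ℝ))) := by
  have hmp : MeasurePreserving (fun y : Fin n → ℝ => y + fun i => ((q i : ℝ))) volume volume :=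
    measurePreserving_add_right volume _
  have hemb : MeasurableEmbedding (fun y : Fin n → ℝ => y + fun i => ((q i : ℝ))) :=
    (MeasurableEquiv.addRight (fun i => ((q i : ℝ)))).measurableEmbedding
  have := hmp.setIntegral_preimage_emb hemb
    (fun x => g (x - fun i => ((q i : ℝ)))) (IocBox n)
  rw [tile]
  rw [← this]
  congr 1
  funext y
  congr 1
  funext i
  simp

lemma setLIntegral_tile {n : ℕ} (g : (Fin n → ℝ) → ℝ≥0∞) (q : Fin n → ℤ) :
    (∫⁻ y in tile n q, g y) = ∫⁻ x in IocBox n, g (x - fun i => ((q i : ℝ))) := by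
  have hmp : MeasurePreserving (fun y : Fin n → ℝ => y + fun i => ((q i : ℝ))) volume volume :=
    measurePreserving_add_right volume _
  have hemb : MeasurableEmbedding (fun y : Fin n → ℝ => y + fun i => ((q i : ℝ))) :=
    (MeasurableEquiv.addRight (fun i => ((q i : ℝ)))).measurableEmbedding
  have := hmp.setLIntegral_comp_preimage_emb hemb
    (fun x => g (x - fun i => ((q i : ℝ)))) (IocBox n)
  rw [tile, ← this]
  congr 1
  funext y
  congr 1
  funext i
  simp

lemma lintegral_eq_tsum_tile {n : ℕ} (g : (Fin n → ℝ) → ℝ≥0∞) (hg : Measurable g) :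
    (∫⁻ y, g y) = ∑' q : Fin n → ℤ, ∫⁻ x in IocBox n, g (x - fun i => ((q i : ℝ))) := by
  conv_lhs => rw [← setLIntegral_univ (μ := (volume : Measure (Fin n → ℝ)))]
  rw [← tile_cover n, lintegral_iUnion (measurableSet_tile n) (tile_disjoint n)]
  exact tsum_congr fun q => setLIntegral_tile g q

lemma hasSum_integral_tile {n : ℕ} (g : (Fin n → ℝ) → ℂ) (hg : Integrable g) :
    HasSum (fun q : Fin n → ℤ => ∫ x in IocBox n, g (x - fun i => ((q i : ℝ))))
      (∫ y, g y) := by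
  have h := hasSum_integral_iUnion (μ := (volume : Measure (Fin n → ℝ)))
    (measurableSet_tile n) (tile_disjoint n)
    (s := tile n) (f := g) (by rw [tile_cover n]; exact hg.integrableOn)
  rw [tile_cover n, setIntegral_univ] at h
  exact h.congr_fun fun q => (setIntegral_tile g q).symm



/-- the function `s̃`. -/
def tld (n k : ℕ) (s : (Fin n → ℝ) × (Fin n → ℝ) → ℂ) : (Fin n → ℝ) × (Fin n → ℝ) → ℂ :=
  fun p => Complex.exp ((k : ℂ) * π * Complex.I * ∑ i, (p.1 i : ℂ) * (p.2 i : ℂ)) * s p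

/-- the auxiliary Fourier coefficient in `x`. -/
def caux (n k : ℕ) (s : (Fin n → ℝ) × (Fin n → ℝ) → ℂ) (m : Fin n → ℤ) (y : Fin n → ℝ) : ℂ :=
  ∫ x in box n, tld n k s (x, y) *
    Complex.exp (-2 * π * Complex.I * ∑ i, (m i : ℂ) * (x i : ℂ))

lemma wb_eq_caux (n k : ℕ) (s : (Fin n → ℝ) × (Fin n → ℝ) → ℂ) (m : Fin n → ℤ)
    (y : Fin n → ℝ) : wb n k s m y = caux n k s m (y + fun i => (m i : ℝ) / k) := by
  unfold wb caux tld
  refine integral_congr_ae (Filter.Eventually.of_forall fun x => ?_)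
  simp only
  have hsum : (∑ i, (x i : ℂ) * ((y i : ℂ) + (m i : ℂ) / (k:ℂ))) =
      ∑ i, (x i : ℂ) * (((y + fun i => (m i : ℝ) / k) i : ℝ) : ℂ) :=
    Finset.sum_congr rfl fun i _ => by simp only [Pi.add_apply]; push_cast; ring
  rw [hsum]

lemma tld_perx {n k : ℕ} {s : (Fin n → ℝ) × (Fin n → ℝ) → ℂ} (hs : QuasiPeriodic n k s)
    (x y : Fin n → ℝ) (q : Fin n → ℤ) :
    tld n k s (x + fun i => (q i : ℝ), y) = tld n k s (x, y) := by
  have h := hs x y q 0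
  have h0 : (fun i : Fin n => (((0 : Fin n → ℤ) i : ℤ) : ℝ)) = (0 : Fin n → ℝ) := by
    funext i; simp
  rw [h0, add_zero] at h
  simp only [Pi.zero_apply, mul_zero, Finset.sum_const_zero, zpow_zero, one_pow, one_mul,
    Int.cast_zero, Complex.ofReal_zero, sub_zero] at h
  unfold tld
  simp only
  rw [h, ← mul_assoc, ← Complex.exp_add]
  congr 2
  have h1 : (∑ i, (((x + fun i => ((q i : ℝ))) i : ℝ) : ℂ) * ((y i : ℝ) : ℂ)) =
      (∑ i, ((x i : ℝ) : ℂ) * ((y i : ℝ) : ℂ)) + ∑ i, ((q i : ℤ) : ℂ) * ((y i : ℝ) : ℂ) := by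
    rw [← Finset.sum_add_distrib]
    refine Finset.sum_congr rfl fun i _ => ?_
    simp only [Pi.add_apply]
    push_cast
    ring
  have h2 : (∑ i, ((y i : ℝ) : ℂ) * ((q i : ℤ) : ℂ)) = ∑ i, ((q i : ℤ) : ℂ) * ((y i : ℝ) : ℂ) :=
    Finset.sum_congr rfl fun i _ => mul_comm _ _
  rw [h1, h2]
  ring

lemma tld_pery {n k : ℕ} {s : (Fin n → ℝ) × (Fin n → ℝ) → ℂ} (hs : QuasiPeriodic n k s)
    (x y : Fin n → ℝ) (q : Fin n → ℤ) :
    tld n k s (x, y + fun i => (q i : ℝ)) =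
      Complex.exp (2 * π * Complex.I * (k : ℂ) * ∑ i, ((q i : ℤ) : ℂ) * ((x i : ℝ) : ℂ)) *
        tld n k s (x, y) := by
  have h := hs x y 0 q
  have h0 : (fun i : Fin n => (((0 : Fin n → ℤ) i : ℤ) : ℝ)) = (0 : Fin n → ℝ) := by
    funext i; simp
  rw [h0, add_zero] at h
  simp only [Pi.zero_apply, zero_mul, mul_zero, Finset.sum_const_zero, zpow_zero, one_pow,
    one_mul, Int.cast_zero, Complex.ofReal_zero, zero_sub] at h
  unfold tld
  simp only
  rw [h, ← mul_assoc, ← Complex.exp_add, ← mul_assoc, ← Complex.exp_add]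
  congr 2
  have h1 : (∑ i, ((x i : ℝ) : ℂ) * (((y + fun i => ((q i : ℝ))) i : ℝ) : ℂ)) =
      (∑ i, ((x i : ℝ) : ℂ) * ((y i : ℝ) : ℂ)) + ∑ i, ((q i : ℤ) : ℂ) * ((x i : ℝ) : ℂ) := by
    rw [← Finset.sum_add_distrib]
    refine Finset.sum_congr rfl fun i _ => ?_
    simp only [Pi.add_apply]
    push_cast
    ring
  have h2 : (∑ i, -(((x i : ℝ) : ℂ) * ((q i : ℤ) : ℂ))) =
      -∑ i, ((q i : ℤ) : ℂ) * ((x i : ℝ) : ℂ) := by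
    rw [← Finset.sum_neg_distrib]
    exact Finset.sum_congr rfl fun i _ => by ring
  rw [h1, h2]
  ring

lemma caux_shift {n k : ℕ} {s : (Fin n → ℝ) × (Fin n → ℝ) → ℂ} (hs : QuasiPeriodic n k s)
    (m q : Fin n → ℤ) (y : Fin n → ℝ) :
    caux n k s m (y + fun i => (q i : ℝ)) = caux n k s (fun i => m i - k * q i) y := by
  unfold caux
  refine integral_congr_ae (Filter.Eventually.of_forall fun x => ?_)
  simp only
  have h1 : (∑ i, (((m i - (k:ℤ) * q i : ℤ)) : ℂ) * ((x i : ℝ) : ℂ)) =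
      (∑ i, ((m i : ℤ) : ℂ) * ((x i : ℝ) : ℂ)) -
        (k : ℂ) * ∑ i, ((q i : ℤ) : ℂ) * ((x i : ℝ) : ℂ) := by
    rw [Finset.mul_sum, ← Finset.sum_sub_distrib]
    refine Finset.sum_congr rfl fun i _ => ?_
    push_cast
    ring
  calc tld n k s (x, y + fun i => ((q i : ℝ))) *
        Complex.exp (-2 * π * Complex.I * ∑ i, ((m i : ℤ) : ℂ) * ((x i : ℝ) : ℂ))
      = tld n k s (x, y) *
        (Complex.exp (2 * π * Complex.I * (k : ℂ) * ∑ i, ((q i : ℤ) : ℂ) * ((x i : ℝ) : ℂ)) *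
         Complex.exp (-2 * π * Complex.I * ∑ i, ((m i : ℤ) : ℂ) * ((x i : ℝ) : ℂ))) := by
        rw [tld_pery hs x y q]; ring
    _ = tld n k s (x, y) *
        Complex.exp (-2 * π * Complex.I * ∑ i, (((m i - (k:ℤ) * q i : ℤ)) : ℂ) * ((x i : ℝ) : ℂ)) := by
        rw [← Complex.exp_add, h1]; congr 2; ring



lemma isCompact_box (n : ℕ) : IsCompact (box n) :=
  isCompact_univ_pi fun _ => isCompact_Icc

lemma box_subset {n : ℕ} : IocBox n ⊆ box n := fun x hx i hi => Ioc_subset_Icc_self (hx i hi)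

lemma continuous_tld (n k : ℕ) {s : (Fin n → ℝ) × (Fin n → ℝ) → ℂ} (hs : Continuous s) :
    Continuous (tld n k s) := by
  have h1 : Continuous fun p : (Fin n → ℝ) × (Fin n → ℝ) => ∑ i, (p.1 i : ℂ) * (p.2 i : ℂ) :=
    continuous_finset_sum _ fun i _ =>
      ((Complex.continuous_ofReal.comp ((continuous_apply i).comp continuous_fst)).mul
        (Complex.continuous_ofReal.comp ((continuous_apply i).comp continuous_snd)))
  exact (Complex.continuous_exp.comp (continuous_const.mul h1)).mul hs

lemma measurable_caux (n k : ℕ) {s : (Fin n → ℝ) × (Fin n → ℝ) → ℂ} (hs : Continuous s)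
    (m : Fin n → ℤ) : StronglyMeasurable (fun y => caux n k s m y) := by
  have hF : StronglyMeasurable fun p : (Fin n → ℝ) × (Fin n → ℝ) =>
      tld n k s (p.2, p.1) * Complex.exp (-2 * π * Complex.I * ∑ i, (m i : ℂ) * (p.2 i : ℂ)) := by
    refine Continuous.stronglyMeasurable ?_
    refine (((continuous_tld n k hs).comp (continuous_snd.prodMk continuous_fst)).mul ?_)
    refine Complex.continuous_exp.comp (continuous_const.mul ?_)
    exact continuous_finset_sum _ fun i _ =>
      (continuous_const.mul (Complex.continuous_ofReal.comp ((continuous_apply i).comp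
        continuous_snd)))
  exact hF.integral_prod_right'

lemma conj_real_sum {n : ℕ} (m : Fin n → ℤ) (x : Fin n → ℝ) :
    conj (∑ i, ((m i : ℤ) : ℂ) * ((x i : ℝ) : ℂ)) = ∑ i, ((m i : ℤ) : ℂ) * ((x i : ℝ) : ℂ) := by
  rw [map_sum]
  exact Finset.sum_congr rfl fun i _ => by
    rw [map_mul, Complex.conj_ofReal]
    norm_num

lemma char_tmk {n : ℕ} (m : Fin n → ℤ) (x : Fin n → ℝ) :
    char m (tmk n x) = Complex.exp (2 * π * Complex.I * ∑ i, (m i : ℂ) * (x i : ℂ)) := by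
  rw [char_apply]
  have h1 : ∀ i, fourier (m i) (tmk n x i) =
      Complex.exp (2 * π * Complex.I * ((m i : ℂ) * (x i : ℂ))) := by
    intro i
    rw [show tmk n x i = ((x i : ℝ) : AddCircle (1:ℝ)) from rfl, fourier_coe_apply]
    simp only [Complex.ofReal_one, Complex.ofReal_intCast, div_one]
    congr 1
    ring
  simp_rw [h1, ← Complex.exp_sum, Finset.mul_sum]

lemma conj_char_tmk {n : ℕ} (m : Fin n → ℤ) (x : Fin n → ℝ) :
    conj (char m (tmk n x)) = Complex.exp (-2 * π * Complex.I * ∑ i, (m i : ℂ) * (x i : ℂ)) := by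
  rw [char_tmk, ← Complex.exp_conj]
  congr 1
  simp only [map_mul, conj_real_sum, Complex.conj_I, Complex.conj_ofReal, map_ofNat]
  ring

/-- Parseval in the `x` variable, for each fixed `y`. -/
lemma parseval (n k : ℕ) {a b : (Fin n → ℝ) × (Fin n → ℝ) → ℂ}
    (ha : Continuous a) (hb : Continuous b)
    (hqa : QuasiPeriodic n k a) (hqb : QuasiPeriodic n k b) (y : Fin n → ℝ) :
    HasSum (fun m : Fin n → ℤ => caux n k a m y * conj (caux n k b m y))
      (∫ x in box n, a (x, y) * conj (b (x, y))) := by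
  classical
  -- the two descended functions
  set fa : (Fin n → ℝ) → ℂ := fun x => tld n k a (x, y) with hfa
  set fb : (Fin n → ℝ) → ℂ := fun x => tld n k b (x, y) with hfb
  have hfa_cont : Continuous fa := (continuous_tld n k ha).comp
    (continuous_id.prodMk continuous_const)
  have hfb_cont : Continuous fb := (continuous_tld n k hb).comp
    (continuous_id.prodMk continuous_const)
  have hfa_per : ∀ (q : Fin n → ℤ) (x : Fin n → ℝ), fa (x + fun i => (q i : ℝ)) = fa x :=
    fun q x => tld_perx hqa x y q
  have hfb_per : ∀ (q : Fin n → ℤ) (x : Fin n → ℝ), fb (x + fun i => (q i : ℝ)) = fb x :=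
    fun q x => tld_perx hqb x y q
  obtain ⟨Ca, hCa⟩ := (isCompact_box n).exists_bound_of_continuousOn hfa_cont.continuousOn
  obtain ⟨Cb, hCb⟩ := (isCompact_box n).exists_bound_of_continuousOn hfb_cont.continuousOn
  have hma : MemLp (descend n fa) 2 (volume : Measure (Torus n)) := by
    refine MemLp.of_bound (measurable_descend hfa_cont.measurable).aestronglyMeasurable Ca ?_
    refine Filter.Eventually.of_forall fun z => ?_
    exact hCa _ (box_subset (fun i _ => sect_mem n z i))
  have hmb : MemLp (descend n fb) 2 (volume : Measure (Torus n)) := by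
    refine MemLp.of_bound (measurable_descend hfb_cont.measurable).aestronglyMeasurable Cb ?_
    refine Filter.Eventually.of_forall fun z => ?_
    exact hCb _ (box_subset (fun i _ => sect_mem n z i))
  set Fa := hma.toLp _ with hFa
  set Fb := hmb.toLp _ with hFb
  -- inner products with the basis
  have key : ∀ (f : (Fin n → ℝ) → ℂ) (hf_cont : Continuous f)
      (hf_per : ∀ (q : Fin n → ℤ) (x : Fin n → ℝ), f (x + fun i => (q i : ℝ)) = f x)
      (hm : MemLp (descend n f) 2 (volume : Measure (Torus n))) (m : Fin n → ℤ),
      (inner ℂ ((charBasis n) m) (hm.toLp _) : ℂ) =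
        ∫ x in box n, f x * Complex.exp (-2 * π * Complex.I * ∑ i, (m i : ℂ) * (x i : ℂ)) := by
    intro f hf_cont hf_per hm m
    rw [coe_charBasis]
    rw [MeasureTheory.L2.inner_def]
    have hae : ∀ᵐ z ∂(volume : Measure (Torus n)),
        (inner ℂ ((charLp n m) z) ((hm.toLp _) z) : ℂ) =
          conj (char m z) * descend n f z := by
      filter_upwards [coeFn_charLp n m, hm.coeFn_toLp] with z h1 h2
      rw [RCLike.inner_apply, h1, h2, mul_comm]
    rw [integral_congr_ae hae]
    have hmeas : AEStronglyMeasurable (fun z => conj (char m z) * descend n f z)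
        (volume : Measure (Torus n)) :=
      (((continuous_star.comp (char m).continuous).measurable).mul
        (measurable_descend hf_cont.measurable)).aestronglyMeasurable
    rw [integral_torus_eq _ hmeas]
    refine integral_congr_ae (Filter.Eventually.of_forall fun x => ?_)
    simp only
    rw [conj_char_tmk, descend_tmk hf_per x, mul_comm]
  have hca : ∀ m, (inner ℂ ((charBasis n) m) Fa : ℂ) = caux n k a m y := fun m =>
    key fa hfa_cont hfa_per hma m
  have hcb : ∀ m, (inner ℂ ((charBasis n) m) Fb : ℂ) = caux n k b m y := fun m =>
    key fb hfb_cont hfb_per hmb m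
  have hGF : (inner ℂ Fb Fa : ℂ) = ∫ x in box n, a (x, y) * conj (b (x, y)) := by
    rw [MeasureTheory.L2.inner_def]
    have hae : ∀ᵐ z ∂(volume : Measure (Torus n)),
        (inner ℂ (Fb z) (Fa z) : ℂ) = conj (descend n fb z) * descend n fa z := by
      filter_upwards [hmb.coeFn_toLp, hma.coeFn_toLp] with z h1 h2
      rw [RCLike.inner_apply, hFb, h1, hFa, h2, mul_comm]
    rw [integral_congr_ae hae]
    have hmeas : AEStronglyMeasurable (fun z => conj (descend n fb z) * descend n fa z)
        (volume : Measure (Torus n)) :=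
      (((continuous_star.comp continuous_id).measurable.comp
          (measurable_descend hfb_cont.measurable)).mul
        (measurable_descend hfa_cont.measurable)).aestronglyMeasurable
    rw [integral_torus_eq _ hmeas]
    refine integral_congr_ae (Filter.Eventually.of_forall fun x => ?_)
    simp only
    rw [descend_tmk hfb_per x, descend_tmk hfa_per x]
    show conj (fb x) * fa x = a (x, y) * conj (b (x, y))
    rw [hfa, hfb]
    unfold tld
    simp only
    rw [map_mul, ← Complex.exp_conj]
    have hconj : conj ((k : ℂ) * π * Complex.I * ∑ i, (x i : ℂ) * (y i : ℂ)) =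
        -((k : ℂ) * π * Complex.I * ∑ i, (x i : ℂ) * (y i : ℂ)) := by
      rw [map_mul, map_mul, map_mul]
      have : conj (∑ i, (x i : ℂ) * (y i : ℂ)) = ∑ i, (x i : ℂ) * (y i : ℂ) := by
        rw [map_sum]
        exact Finset.sum_congr rfl fun i _ => by
          rw [map_mul, Complex.conj_ofReal, Complex.conj_ofReal]
      rw [this]
      simp only [map_mul, Complex.conj_I, Complex.conj_ofReal, map_natCast]
      ring
    rw [hconj]
    have hmul : Complex.exp (-((k : ℂ) * π * Complex.I * ∑ i, (x i : ℂ) * (y i : ℂ))) *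
        Complex.exp ((k : ℂ) * π * Complex.I * ∑ i, (x i : ℂ) * (y i : ℂ)) = 1 := by
      rw [← Complex.exp_add, neg_add_cancel, Complex.exp_zero]
    calc Complex.exp (-((k : ℂ) * π * Complex.I * ∑ i, (x i : ℂ) * (y i : ℂ))) * conj (b (x,y)) *
          (Complex.exp ((k : ℂ) * π * Complex.I * ∑ i, (x i : ℂ) * (y i : ℂ)) * a (x,y))
        = (Complex.exp (-((k : ℂ) * π * Complex.I * ∑ i, (x i : ℂ) * (y i : ℂ))) *
            Complex.exp ((k : ℂ) * π * Complex.I * ∑ i, (x i : ℂ) * (y i : ℂ))) *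
            (a (x,y) * conj (b (x,y))) := by ring
      _ = a (x,y) * conj (b (x,y)) := by rw [hmul, one_mul]
  have h := (charBasis n).hasSum_inner_mul_inner Fb Fa
  rw [hGF] at h
  refine h.congr_fun fun m => ?_
  rw [← hca m, ← hcb m, ← inner_conj_symm Fb ((charBasis n) m)]
  ring


lemma hasSum_sq (n k : ℕ) {a : (Fin n → ℝ) × (Fin n → ℝ) → ℂ}
    (ha : Continuous a) (hqa : QuasiPeriodic n k a) (y : Fin n → ℝ) :
    HasSum (fun m : Fin n → ℤ => ‖caux n k a m y‖ ^ 2)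
      ((∫ x in box n, a (x, y) * conj (a (x, y))).re) := by
  have h := parseval n k ha ha hqa hqa y
  have h2 := ((Complex.hasSum_iff _ _).1 h).1
  refine h2.congr_fun fun m => ?_
  show ‖caux n k a m y‖ ^ 2 = (caux n k a m y * conj (caux n k a m y)).re
  rw [Complex.mul_conj, Complex.ofReal_re, Complex.normSq_eq_norm_sq]

lemma tsum_sq_le (n k : ℕ) {a : (Fin n → ℝ) × (Fin n → ℝ) → ℂ}
    (ha : Continuous a) (hqa : QuasiPeriodic n k a) {Ca : ℝ}
    (hCa : ∀ p ∈ (box n) ×ˢ (box n), ‖a p‖ ≤ Ca) {y : Fin n → ℝ} (hy : y ∈ box n) :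
    (∑' m : Fin n → ℤ, ‖caux n k a m y‖ ^ 2) ≤ Ca ^ 2 := by
  rw [(hasSum_sq n k ha hqa y).tsum_eq]
  have h1 : ‖∫ x in box n, a (x, y) * conj (a (x, y))‖ ≤ Ca ^ 2 := by
    have := norm_setIntegral_le_of_norm_le_const (μ := (volume : Measure (Fin n → ℝ)))
      (s := box n) (by rw [volume_box]; exact ENNReal.one_lt_top) (C := Ca ^ 2)
      (f := fun x => a (x, y) * conj (a (x, y))) ?_
    · simpa [Measure.real, volume_box] using this
    · intro x hx
      rw [norm_mul, RCLike.norm_conj, ← sq]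
      have hnonneg : (0:ℝ) ≤ ‖a (x, y)‖ := norm_nonneg _
      exact pow_le_pow_left₀ hnonneg (hCa (x, y) (Set.mk_mem_prod hx hy)) 2
  calc (∫ x in box n, a (x, y) * conj (a (x, y))).re
      ≤ |(∫ x in box n, a (x, y) * conj (a (x, y))).re| := le_abs_self _
    _ ≤ ‖∫ x in box n, a (x, y) * conj (a (x, y))‖ := Complex.abs_re_le_norm _
    _ ≤ Ca ^ 2 := h1

lemma ennreal_mul_le_sq_add_sq (p q : ℝ≥0∞) : p * q ≤ p ^ 2 + q ^ 2 := by
  rcases le_total p q with h | h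
  · calc p * q ≤ q * q := mul_le_mul_left h q
      _ = q ^ 2 := (sq q).symm
      _ ≤ p ^ 2 + q ^ 2 := le_add_self
  · calc p * q ≤ p * p := mul_le_mul_right h p
      _ = p ^ 2 := (sq p).symm
      _ ≤ p ^ 2 + q ^ 2 := le_self_add

lemma lintegral_tsum_sq_le (n k : ℕ) {a : (Fin n → ℝ) × (Fin n → ℝ) → ℂ}
    (ha : Continuous a) (hqa : QuasiPeriodic n k a) {Ca : ℝ}
    (hCa : ∀ p ∈ (box n) ×ˢ (box n), ‖a p‖ ≤ Ca) :
    (∑' m : Fin n → ℤ, ∫⁻ y in box n, ((‖caux n k a m y‖₊ : ℝ≥0∞)) ^ 2) ≤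
      ENNReal.ofReal (Ca ^ 2) := by
  rw [← MeasureTheory.lintegral_tsum (fun m =>
    ((measurable_caux n k ha m).measurable.nnnorm.coe_nnreal_ennreal.pow_const 2).aemeasurable)]
  have hbound : ∀ y ∈ box n,
      (∑' m : Fin n → ℤ, ((‖caux n k a m y‖₊ : ℝ≥0∞)) ^ 2) ≤ ENNReal.ofReal (Ca ^ 2) := by
    intro y hy
    have hsummable : Summable (fun m : Fin n → ℤ => ‖caux n k a m y‖ ^ 2) :=
      (hasSum_sq n k ha hqa y).summable
    have hconv : ∀ m : Fin n → ℤ, ((‖caux n k a m y‖₊ : ℝ≥0∞)) ^ 2 =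
        ENNReal.ofReal (‖caux n k a m y‖ ^ 2) := by
      intro m
      rw [ENNReal.ofReal_pow (norm_nonneg _), ofReal_norm, enorm_eq_nnnorm]
    simp_rw [hconv]
    rw [← ENNReal.ofReal_tsum_of_nonneg (fun m => sq_nonneg _) hsummable]
    exact ENNReal.ofReal_le_ofReal (tsum_sq_le n k ha hqa hCa hy)
  calc (∫⁻ y in box n, ∑' m : Fin n → ℤ, ((‖caux n k a m y‖₊ : ℝ≥0∞)) ^ 2)
      ≤ ∫⁻ _ in box n, ENNReal.ofReal (Ca ^ 2) := by
        refine lintegral_mono_ae ((ae_restrict_iff' (measurableSet_box n)).mpr ?_)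
        exact Filter.Eventually.of_forall hbound
    _ = ENNReal.ofReal (Ca ^ 2) := by
        rw [setLIntegral_const, volume_box, mul_one]

/-- The crucial finiteness. -/
lemma Nsum_lt_top (n k : ℕ) {a b : (Fin n → ℝ) × (Fin n → ℝ) → ℂ}
    (ha : Continuous a) (hb : Continuous b)
    (hqa : QuasiPeriodic n k a) (hqb : QuasiPeriodic n k b) :
    (∑' m : Fin n → ℤ, ∫⁻ y in box n,
      ((‖caux n k a m y‖₊ : ℝ≥0∞)) * ((‖caux n k b m y‖₊ : ℝ≥0∞))) < ∞ := by
  obtain ⟨Ca, hCa⟩ := ((isCompact_box n).prod (isCompact_box n)).exists_bound_of_continuousOn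
    ha.continuousOn
  obtain ⟨Cb, hCb⟩ := ((isCompact_box n).prod (isCompact_box n)).exists_bound_of_continuousOn
    hb.continuousOn
  have hle : (∑' m : Fin n → ℤ, ∫⁻ y in box n,
      ((‖caux n k a m y‖₊ : ℝ≥0∞)) * ((‖caux n k b m y‖₊ : ℝ≥0∞))) ≤
      (∑' m : Fin n → ℤ, ∫⁻ y in box n, ((‖caux n k a m y‖₊ : ℝ≥0∞)) ^ 2) +
      (∑' m : Fin n → ℤ, ∫⁻ y in box n, ((‖caux n k b m y‖₊ : ℝ≥0∞)) ^ 2) := by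
    rw [← ENNReal.tsum_add]
    refine ENNReal.tsum_le_tsum fun m => ?_
    rw [← lintegral_add_left
      ((measurable_caux n k ha m).measurable.nnnorm.coe_nnreal_ennreal.pow_const 2)]
    exact lintegral_mono fun y => ennreal_mul_le_sq_add_sq _ _
  refine lt_of_le_of_lt hle ?_
  refine lt_of_le_of_lt (add_le_add (lintegral_tsum_sq_le n k ha hqa hCa)
    (lintegral_tsum_sq_le n k hb hqb hCb)) ?_
  exact ENNReal.add_lt_top.mpr ⟨ENNReal.ofReal_lt_top, ENNReal.ofReal_lt_top⟩


lemma measurable_cprod (n k : ℕ) {a b : (Fin n → ℝ) × (Fin n → ℝ) → ℂ}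
    (ha : Continuous a) (hb : Continuous b) (ma mb : Fin n → ℤ) :
    Measurable (fun y => caux n k a ma y * conj (caux n k b mb y)) :=
  ((measurable_caux n k ha ma).measurable.mul
    ((continuous_star.measurable).comp (measurable_caux n k hb mb).measurable))

lemma nnnorm_cprod (n k : ℕ) (a b : (Fin n → ℝ) × (Fin n → ℝ) → ℂ) (ma mb : Fin n → ℤ)
    (y : Fin n → ℝ) :
    ((‖caux n k a ma y * conj (caux n k b mb y)‖₊ : ℝ≥0∞)) =
      ((‖caux n k a ma y‖₊ : ℝ≥0∞)) * ((‖caux n k b mb y‖₊ : ℝ≥0∞)) := by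
  rw [nnnorm_mul, RCLike.nnnorm_conj, ENNReal.coe_mul]

lemma sub_coe_eq_add_coe {n : ℕ} (x : Fin n → ℝ) (q : Fin n → ℤ) :
    (x - fun i => (((-q) i : ℤ) : ℝ)) = x + fun i => ((q i : ℤ) : ℝ) := by
  funext i
  simp only [Pi.sub_apply, Pi.add_apply, Pi.neg_apply]
  push_cast
  ring

lemma caux_shift' {n k : ℕ} {s : (Fin n → ℝ) × (Fin n → ℝ) → ℂ} (hs : QuasiPeriodic n k s)
    (m q : Fin n → ℤ) (y : Fin n → ℝ) :
    caux n k s (fun i => m i - k * q i) y = caux n k s m (y + fun i => (q i : ℝ)) :=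
  (caux_shift hs m q y).symm

/-- S3: integrability of the product of coefficients over `ℝⁿ`. -/
lemma integrable_cprod (n k : ℕ) (hk : 0 < k) {a b : (Fin n → ℝ) × (Fin n → ℝ) → ℂ}
    (ha : Continuous a) (hb : Continuous b)
    (hqa : QuasiPeriodic n k a) (hqb : QuasiPeriodic n k b) (r : Fin n → ℤ) :
    Integrable (fun y => caux n k a r y * conj (caux n k b r y))
      (volume : Measure (Fin n → ℝ)) := by
  refine ⟨(measurable_cprod n k ha hb r r).aestronglyMeasurable, ?_⟩
  show (∫⁻ y, ↑‖caux n k a r y * conj (caux n k b r y)‖₊) < ∞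
  rw [← setLIntegral_univ, ← tile_cover n,
    lintegral_iUnion (measurableSet_tile n) (tile_disjoint n)]
  have hterm : ∀ q : Fin n → ℤ,
      (∫⁻ y in tile n q, ↑‖caux n k a r y * conj (caux n k b r y)‖₊) =
        ∫⁻ y in box n, ((‖caux n k a (fun i => r i + k * q i) y‖₊ : ℝ≥0∞)) *
          ((‖caux n k b (fun i => r i + k * q i) y‖₊ : ℝ≥0∞)) := by
    intro q
    rw [setLIntegral_tile]
    rw [restrict_box_eq]
    refine lintegral_congr fun y => ?_
    have hshift : ∀ (s : (Fin n → ℝ) × (Fin n → ℝ) → ℂ), QuasiPeriodic n k s →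
        caux n k s r (y - fun i => ((q i : ℤ) : ℝ)) =
          caux n k s (fun i => r i + k * q i) y := by
      intro s hs
      have h1 : (y - fun i => ((q i : ℤ) : ℝ)) = y + fun i => (((-q) i : ℤ) : ℝ) := by
        funext i; simp only [Pi.sub_apply, Pi.add_apply, Pi.neg_apply]; push_cast; ring
      rw [h1, caux_shift hs r (-q) y]
      congr 1
      funext i
      simp only [Pi.neg_apply]
      ring
    rw [hshift a hqa, hshift b hqb, nnnorm_cprod]
  rw [lt_top_iff_ne_top]
  intro hcon
  have hN := Nsum_lt_top n k ha hb hqa hqb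
  have hinj : Function.Injective (fun q : Fin n → ℤ => fun i => r i + (k:ℤ) * q i) := by
    intro q q' h
    funext i
    have := congrFun h i
    simp only at this
    have hk' : (k:ℤ) ≠ 0 := by exact_mod_cast hk.ne'
    exact mul_left_cancel₀ hk' (by linarith [this])
  have hle := ENNReal.tsum_comp_le_tsum_of_injective hinj
    (fun m => ∫⁻ y in box n,
      ((‖caux n k a m y‖₊ : ℝ≥0∞)) * ((‖caux n k b m y‖₊ : ℝ≥0∞)))
  rw [lt_top_iff_ne_top] at hN
  apply hN
  rw [← top_le_iff]
  calc (⊤ : ℝ≥0∞) = ∑' q : Fin n → ℤ, ∫⁻ y in tile n q,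
        ↑‖caux n k a r y * conj (caux n k b r y)‖₊ := hcon.symm
    _ = ∑' q : Fin n → ℤ, ∫⁻ y in box n,
        ((‖caux n k a (fun i => r i + k * q i) y‖₊ : ℝ≥0∞)) *
          ((‖caux n k b (fun i => r i + k * q i) y‖₊ : ℝ≥0∞)) := tsum_congr hterm
    _ ≤ ∑' m : Fin n → ℤ, ∫⁻ y in box n,
        ((‖caux n k a m y‖₊ : ℝ≥0∞)) * ((‖caux n k b m y‖₊ : ℝ≥0∞)) := hle


end WB

open WB

/-- Unitarity of the Weil–Brezin transform: for smooth `k`-quasi-periodic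
`a, b : ℝ^{2n} → ℂ` (with `ℏ = 1/k`),
`∫_{[0,1]^{2n}} a·conj(b) = Σ_{m ∈ {0,…,k−1}^n} ∫_{ℝ^n} (a)_m·conj((b)_m)`,
each integral on the right being absolutely convergent. -/
theorem statement18 (n : ℕ) (hn : 1 ≤ n) (k : ℕ) (hk : 1 ≤ k)
    (a b : (Fin n → ℝ) × (Fin n → ℝ) → ℂ)
    (ha : ContDiff ℝ (⊤ : ℕ∞) a) (hb : ContDiff ℝ (⊤ : ℕ∞) b)
    (hqa : QuasiPeriodic n k a) (hqb : QuasiPeriodic n k b) :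
    (∀ m : Fin n → Fin k,
      Integrable (fun y : Fin n → ℝ =>
        wb n k a (fun i => (m i : ℤ)) y * starRingEnd ℂ (wb n k b (fun i => (m i : ℤ)) y))) ∧
    (∫ u in (box n) ×ˢ (box n), a u * starRingEnd ℂ (b u)) =
      ∑ m : Fin n → Fin k,
        ∫ y : Fin n → ℝ,
          wb n k a (fun i => (m i : ℤ)) y * starRingEnd ℂ (wb n k b (fun i => (m i : ℤ)) y) := by
  classical
  have hac : Continuous a := ha.continuous
  have hbc : Continuous b := hb.continuous
  have hk0 : 0 < k := hk
  -- integrability of the wb products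
  have hIntWb : ∀ m : Fin n → Fin k,
      Integrable (fun y : Fin n → ℝ =>
        wb n k a (fun i => (m i : ℤ)) y * conj (wb n k b (fun i => (m i : ℤ)) y)) := by
    intro m
    have h0 := integrable_cprod n k hk0 hac hbc hqa hqb (fun i => (m i : ℤ))
    have h1 := h0.comp_add_right (fun i => (((m i : ℤ) : ℝ)) / k)
    refine h1.congr (Filter.Eventually.of_forall fun y => ?_)
    simp only
    rw [wb_eq_caux, wb_eq_caux]
  refine ⟨hIntWb, ?_⟩
  -- step 1 : Fubini on the left-hand side
  have hprod_int : IntegrableOn (fun u : (Fin n → ℝ) × (Fin n → ℝ) => a u * conj (b u))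
      ((box n) ×ˢ (box n)) volume :=
    (hac.mul (continuous_star.comp hbc)).continuousOn.integrableOn_compact
      ((isCompact_box n).prod (isCompact_box n))
  have hswap_int : Integrable
      (Function.uncurry fun x y : Fin n → ℝ => a (x, y) * conj (b (x, y)))
      ((volume.restrict (box n)).prod (volume.restrict (box n))) := by
    rw [Measure.prod_restrict]
    exact hprod_int
  have hF1 : (∫ u in (box n) ×ˢ (box n), a u * conj (b u)) =
      ∫ y in box n, ∫ x in box n, a (x, y) * conj (b (x, y)) := by
    rw [show (∫ u in (box n) ×ˢ (box n), a u * conj (b u)) =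
        ∫ x in box n, ∫ y in box n, a (x, y) * conj (b (x, y)) from
      MeasureTheory.setIntegral_prod _ hprod_int]
    exact integral_integral_swap hswap_int
  -- step 2 : swap with the sum
  have hmeasm : ∀ m : Fin n → ℤ, AEStronglyMeasurable
      (fun y => caux n k a m y * conj (caux n k b m y)) (volume.restrict (box n)) := fun m =>
    (measurable_cprod n k hac hbc m m).aestronglyMeasurable
  have hN := Nsum_lt_top n k hac hbc hqa hqb
  have hNnorm : (∑' m : Fin n → ℤ, ∫⁻ y in box n,
      ↑‖caux n k a m y * conj (caux n k b m y)‖₊) ≠ ⊤ := by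
    intro hcon
    rw [lt_top_iff_ne_top] at hN
    apply hN
    rw [← hcon]
    exact (tsum_congr fun m => lintegral_congr fun y => (nnnorm_cprod n k a b m m y)).symm
  have hSg : Summable (fun m : Fin n → ℤ =>
      ∫ y in box n, caux n k a m y * conj (caux n k b m y)) := by
    refine Summable.of_norm_bounded
      (g := fun m => (∫⁻ y in box n,
        ((‖caux n k a m y‖₊ : ℝ≥0∞)) * ((‖caux n k b m y‖₊ : ℝ≥0∞))).toReal)
      (ENNReal.summable_toReal (lt_top_iff_ne_top.mp hN)) ?_
    intro m
    have h1 := norm_integral_le_lintegral_norm (μ := volume.restrict (box n))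
      (f := fun y => caux n k a m y * conj (caux n k b m y))
    refine le_trans h1 (le_of_eq ?_)
    congr 1
    refine lintegral_congr fun y => ?_
    rw [ofReal_norm, enorm_eq_nnnorm, nnnorm_cprod]
  have e := zEquivn n k hk0
  calc (∫ u in (box n) ×ˢ (box n), a u * conj (b u))
      = ∫ y in box n, ∫ x in box n, a (x, y) * conj (b (x, y)) := hF1
    _ = ∫ y in box n, ∑' m : Fin n → ℤ, caux n k a m y * conj (caux n k b m y) := by
        refine integral_congr_ae (Filter.Eventually.of_forall fun y => ?_)
        exact ((parseval n k hac hbc hqa hqb y).tsum_eq).symm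
    _ = ∑' m : Fin n → ℤ, ∫ y in box n, caux n k a m y * conj (caux n k b m y) :=
        integral_tsum hmeasm hNnorm
    _ = ∑' p : (Fin n → Fin k) × (Fin n → ℤ),
          ∫ y in box n, caux n k a ((zEquivn n k hk0).symm p) y *
            conj (caux n k b ((zEquivn n k hk0).symm p) y) :=
        ((zEquivn n k hk0).symm.tsum_eq _).symm
    _ = ∑' r : Fin n → Fin k, ∑' q : Fin n → ℤ,
          ∫ y in box n, caux n k a ((zEquivn n k hk0).symm (r, q)) y *
            conj (caux n k b ((zEquivn n k hk0).symm (r, q)) y) :=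
        by
          have hs2 : Summable fun p : (Fin n → Fin k) × (Fin n → ℤ) =>
              ∫ y in box n, caux n k a ((zEquivn n k hk0).symm p) y *
                conj (caux n k b ((zEquivn n k hk0).symm p) y) :=
            (zEquivn n k hk0).symm.summable_iff.mpr hSg
          exact Summable.tsum_prod' hs2 fun r => hs2.prod_factor r
    _ = ∑ r : Fin n → Fin k, ∑' q : Fin n → ℤ,
          ∫ y in box n, caux n k a ((zEquivn n k hk0).symm (r, q)) y *
            conj (caux n k b ((zEquivn n k hk0).symm (r, q)) y) := tsum_fintype _
    _ = ∑ m : Fin n → Fin k, ∫ y : Fin n → ℝ,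
          wb n k a (fun i => (m i : ℤ)) y * conj (wb n k b (fun i => (m i : ℤ)) y) := by
        refine Finset.sum_congr rfl fun r _ => ?_
        have hterm : ∀ q : Fin n → ℤ,
            (∫ y in box n, caux n k a ((zEquivn n k hk0).symm (r, q)) y *
              conj (caux n k b ((zEquivn n k hk0).symm (r, q)) y)) =
            ∫ y in box n, caux n k a (fun i => (r i : ℤ)) (y + fun i => ((q i : ℤ) : ℝ)) *
              conj (caux n k b (fun i => (r i : ℤ)) (y + fun i => ((q i : ℤ) : ℝ))) := by
          intro q
          have hsy : (zEquivn n k hk0).symm (r, q) =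
              fun i => (r i : ℤ) - (k : ℤ) * q i :=
            funext fun i => zEquivn_symm_apply n k hk0 r q i
          rw [hsy]
          refine integral_congr_ae (Filter.Eventually.of_forall fun y => ?_)
          simp only
          rw [caux_shift' hqa, caux_shift' hqb]
        have hH := hasSum_integral_tile
          (fun y => caux n k a (fun i => (r i : ℤ)) y * conj (caux n k b (fun i => (r i : ℤ)) y))
          (integrable_cprod n k hk0 hac hbc hqa hqb (fun i => (r i : ℤ)))
        have hH2 := (Equiv.hasSum_iff (Equiv.neg (Fin n → ℤ))).mpr hH
        have hH3 : HasSum (fun q : Fin n → ℤ =>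
            ∫ y in box n, caux n k a (fun i => (r i : ℤ)) (y + fun i => ((q i : ℤ) : ℝ)) *
              conj (caux n k b (fun i => (r i : ℤ)) (y + fun i => ((q i : ℤ) : ℝ))))
            (∫ y : Fin n → ℝ, caux n k a (fun i => (r i : ℤ)) y *
              conj (caux n k b (fun i => (r i : ℤ)) y)) := by
          refine hH2.congr_fun fun q => ?_
          show (∫ y in box n, caux n k a (fun i => (r i : ℤ)) (y + fun i => ((q i : ℤ) : ℝ)) *
              conj (caux n k b (fun i => (r i : ℤ)) (y + fun i => ((q i : ℤ) : ℝ)))) = _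
          rw [restrict_box_eq]
          refine integral_congr_ae (Filter.Eventually.of_forall fun x => ?_)
          simp only [Function.comp, Equiv.neg_apply]
          rw [sub_coe_eq_add_coe]
        calc (∑' q : Fin n → ℤ,
              ∫ y in box n, caux n k a ((zEquivn n k hk0).symm (r, q)) y *
                conj (caux n k b ((zEquivn n k hk0).symm (r, q)) y))
            = ∑' q : Fin n → ℤ,
              ∫ y in box n, caux n k a (fun i => (r i : ℤ)) (y + fun i => ((q i : ℤ) : ℝ)) *
                conj (caux n k b (fun i => (r i : ℤ)) (y + fun i => ((q i : ℤ) : ℝ))) :=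
              tsum_congr hterm
          _ = ∫ y : Fin n → ℝ, caux n k a (fun i => (r i : ℤ)) y *
                conj (caux n k b (fun i => (r i : ℤ)) y) := hH3.tsum_eq
          _ = ∫ y : Fin n → ℝ, caux n k a (fun i => (r i : ℤ))
                  (y + fun i => (((r i : ℤ) : ℝ)) / k) *
                conj (caux n k b (fun i => (r i : ℤ)) (y + fun i => (((r i : ℤ) : ℝ)) / k)) :=
              (integral_add_right_eq_self _ _).symm
          _ = ∫ y : Fin n → ℝ, wb n k a (fun i => (r i : ℤ)) y *
                conj (wb n k b (fun i => (r i : ℤ)) y) := by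
              refine integral_congr_ae (Filter.Eventually.of_forall fun y => ?_)
              simp only
              rw [wb_eq_caux, wb_eq_caux]
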